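/- arXiv:2210.08898 — 4 statements merged into one kernel-verified Lean document; each statement's English description precedes it below -/
import Mathlib

section
/- Let 1 < q < p and suppose that (q-1)s^p + q s^{p-1} - (p-q)s + (q-p+1) ≥ 0 for all s ≥ 0. Then q - p + 1 > 0, i.e., p < q + 1. -/
/-!
If `p ≥ q + 1`, the constant and linear terms together are at most `-s`, and on `(0, 1]` the
term `s ^ p` is dominated by `s ^ (p - 1) = s * s ^ (p - 2)`. So the expression is at most
`s * ((2q - 1) s ^ (p - 2) - 1)`, which is negative for small `s > 0` since `p - 2 ≥ q - 1 > 0`.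
-/

open Filter Topology

theorem exists_pos_le_one_rpow_lt {r ε : ℝ} (hr : 0 < r) (hε : 0 < ε) :
    ∃ s : ℝ, 0 < s ∧ s ≤ 1 ∧ s ^ r < ε := by
  have hlim : Tendsto (fun s : ℝ => s ^ r) (𝓝[>] 0) (𝓝 0) := by
    simpa [Real.zero_rpow hr.ne'] using
      (Real.continuousAt_rpow_const 0 r (Or.inr hr.le)).tendsto.mono_left nhdsWithin_le_nhds
  obtain ⟨s, ⟨hs0, hs1⟩, hsr⟩ :=
    (Eventually.and (Ioc_mem_nhdsGT one_pos)
      (hlim.eventually (gt_mem_nhds hε))).exists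
  exact ⟨s, hs0, hs1, hsr⟩

theorem le_mul_rpow_sub_two_of_add_one_le {p q s : ℝ} (hq : 1 < q) (hpq : q + 1 ≤ p)
    (hs0 : 0 < s) (hs1 : s ≤ 1) :
    (q - 1) * s ^ p + q * s ^ (p - 1) - (p - q) * s + (q - p + 1)
      ≤ s * ((2 * q - 1) * s ^ (p - 2) - 1) := by
  have hsplit : s ^ (p - 1) = s * s ^ (p - 2) := by
    rw [show p - 1 = 1 + (p - 2) by ring, Real.rpow_add hs0, Real.rpow_one]
  have hdom : s ^ p ≤ s ^ (p - 1) :=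
    Real.rpow_le_rpow_of_exponent_ge hs0 hs1 (by linarith)
  have hlin : -(p - q) * s + (q - p + 1) ≤ -s := by nlinarith
  nlinarith [mul_le_mul_of_nonneg_left hdom (by linarith : (0 : ℝ) ≤ q - 1)]

theorem stmt0_general (p q : ℝ) (hq : 1 < q)
    (h : ∀ s : ℝ, 0 ≤ s →
      0 ≤ (q - 1) * s ^ p + q * s ^ (p - 1) - (p - q) * s + (q - p + 1)) :
    0 < q - p + 1 := by
  by_contra! hc
  have hq' : 0 < 2 * q - 1 := by linarith
  obtain ⟨s, hs0, hs1, hsmall⟩ :=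
    exists_pos_le_one_rpow_lt (r := p - 2) (by linarith) (one_div_pos.mpr hq')
  have hneg : (2 * q - 1) * s ^ (p - 2) - 1 < 0 := by
    linarith [(lt_div_iff₀' hq').mp hsmall]
  have hbound := le_mul_rpow_sub_two_of_add_one_le (p := p) hq (by linarith) hs0 hs1
  linarith [h s hs0.le, hbound, mul_neg_of_pos_of_neg hs0 hneg]

theorem stmt0 (p q : ℝ) (hq : 1 < q) (hqp : q < p)
    (h : ∀ s : ℝ, 0 ≤ s →
      0 ≤ (q - 1) * s ^ p + q * s ^ (p - 1) - (p - q) * s + (q - p + 1)) :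
    0 < q - p + 1 :=
  stmt0_general p q hq h
end

section
/- Let Ω ⊂ ℝ^N be a bounded connected open set, and for r > 0 let Ω_r = {x ∈ Ω : dist(x, ∂Ω) < r}. Let ρ > r > 0 be such that Ω \ Ω_r is nonempty. Then every connected component of Ω_ρ intersects Ω \ Ω_r. -/
theorem stmt2 {N : ℕ} (Ω : Set (EuclideanSpace ℝ (Fin N)))
    (hΩo : IsOpen Ω) (hΩc : IsConnected Ω) (hΩb : Bornology.IsBounded Ω)
    (r ρ : ℝ) (hr : 0 < r) (hrρ : r < ρ)
    (hne : (Ω \ {x ∈ Ω | Metric.infDist x (frontier Ω) < r}).Nonempty) :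
    ∀ x ∈ {y ∈ Ω | Metric.infDist y (frontier Ω) < ρ},
      (connectedComponentIn {y ∈ Ω | Metric.infDist y (frontier Ω) < ρ} x ∩
        (Ω \ {y ∈ Ω | Metric.infDist y (frontier Ω) < r})).Nonempty := by
  intro x hx
  set F := frontier Ω
  set D : Set (EuclideanSpace ℝ (Fin N)) := {y ∈ Ω | Metric.infDist y F < ρ} with hD
  have hDo : IsOpen D := by
    have : D = Ω ∩ (fun y => Metric.infDist y F) ⁻¹' Set.Iio ρ := by
      ext y; simp [hD, Set.mem_setOf_eq]
    rw [this]
    exact hΩo.inter (isOpen_Iio.preimage (Metric.continuous_infDist_pt F))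
  set C := connectedComponentIn D x with hC
  have hCo : IsOpen C := hDo.connectedComponentIn
  have hxC : x ∈ C := mem_connectedComponentIn hx
  by_contra hcon
  rw [Set.not_nonempty_iff_eq_empty] at hcon
  -- C ⊆ Ω_r
  have hCr : C ⊆ {y ∈ Ω | Metric.infDist y F < r} := by
    intro y hy
    have hyD : y ∈ D := connectedComponentIn_subset D x hy
    by_contra hyr
    exact Set.eq_empty_iff_forall_notMem.mp hcon y ⟨hy, hyD.1, hyr⟩
  -- Ω ∩ closure C ⊆ C
  have hclos : Ω ∩ closure C ⊆ C := by
    intro y ⟨hyΩ, hyc⟩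
    have hyle : Metric.infDist y F ≤ r := by
      have : closure C ⊆ (fun z => Metric.infDist z F) ⁻¹' Set.Iic r := by
        apply closure_minimal
        · intro z hz; exact le_of_lt (hCr hz).2
        · exact IsClosed.preimage (Metric.continuous_infDist_pt F) isClosed_Iic
      exact this hyc
    have hyD : y ∈ D := ⟨hyΩ, lt_of_le_of_lt hyle hrρ⟩
    have hC'o : IsOpen (connectedComponentIn D y) := hDo.connectedComponentIn
    obtain ⟨z, hz1, hz2⟩ := mem_closure_iff.mp hyc _ hC'o (mem_connectedComponentIn hyD)
    have h1 : connectedComponentIn D y = connectedComponentIn D z := connectedComponentIn_eq hz1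
    have h2 : C = connectedComponentIn D z := connectedComponentIn_eq hz2
    rw [h2, ← h1]
    exact mem_connectedComponentIn hyD
  -- Ω preconnected ⇒ Ω ⊆ C
  have hΩC : Ω ⊆ C := by
    by_contra hnotsub
    have h1 : Ω ⊆ C ∪ (closure C)ᶜ := by
      intro y hy
      by_cases hyc : y ∈ closure C
      · exact Or.inl (hclos ⟨hy, hyc⟩)
      · exact Or.inr hyc
    have h2 : (Ω ∩ C).Nonempty := ⟨x, (connectedComponentIn_subset D x hxC).1, hxC⟩
    have h3 : (Ω ∩ (closure C)ᶜ).Nonempty := by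
      rw [Set.not_subset] at hnotsub
      obtain ⟨y, hyΩ, hyC⟩ := hnotsub
      refine ⟨y, hyΩ, fun hyc => hyC (hclos ⟨hyΩ, hyc⟩)⟩
    obtain ⟨z, _, hz1, hz2⟩ := hΩc.isPreconnected _ _ hCo (isClosed_closure.isOpen_compl) h1 h2 h3
    exact hz2 (subset_closure hz1)
  obtain ⟨w, hwΩ, hwr⟩ := hne
  exact hwr (hCr (hΩC hwΩ))
end

section
/- Let p > 1, 1 < q < p, and let A > 0, B > 0, D > 0 be real numbers. Define F : [0,∞) → ℝ by F(t) = A t^{p-1} − η B t^{q-1} + D, where η > 0. If η < [(p-1)/((p-q)^{(p-q)/(p-1)} (q-1)^{(q-1)/(p-1)})] · A^{(q-1)/(p-1)} D^{(p-q)/(p-1)} / B, then F(t) > 0 for all t ≥ 0. -/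
/-!
Write `α = (q-1)/(p-1)` and `β = (p-q)/(p-1)`, so `α + β = 1` and `t^(q-1) = (t^(p-1))^α`.
Weighted AM-GM applied to `A t^(p-1)/α` and `D/β` gives `K t^(q-1) ≤ A t^(p-1) + D` with
`K = (A/α)^α (D/β)^β`, and `K` is exactly `B` times the threshold for `η`; so `η B t^(q-1) < K t^(q-1)` wherever
`t^(q-1) > 0`, and where it vanishes `D > 0` gives the strict inequality.
-/

open Real

lemma rpow_weighted_le_mul_add {α β A D s : ℝ} (hα : 0 < α) (hβ : 0 < β) (hαβ : α + β = 1)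
    (hA : 0 ≤ A) (hD : 0 ≤ D) (hs : 0 ≤ s) :
    (A / α) ^ α * (D / β) ^ β * s ^ α ≤ A * s + D := by
  have amgm := geom_mean_le_arith_mean2_weighted hα.le hβ.le
    (div_nonneg (mul_nonneg hA hs) hα.le) (div_nonneg hD hβ.le) hαβ
  calc (A / α) ^ α * (D / β) ^ β * s ^ α = (A * s / α) ^ α * (D / β) ^ β := by
        rw [mul_div_right_comm, mul_rpow (div_nonneg hA hα.le) hs]; ring
    _ ≤ α * (A * s / α) + β * (D / β) := amgm
    _ = A * s + D := by field_simp

lemma div_rpow_mul_div_rpow_eq {a b A D : ℝ} (ha : 0 < a) (hb : 0 < b) (hA : 0 ≤ A) (hD : 0 ≤ D) :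
    (A / (a / (a + b))) ^ (a / (a + b)) * (D / (b / (a + b))) ^ (b / (a + b)) =
      (a + b) / (b ^ (b / (a + b)) * a ^ (a / (a + b))) * (A ^ (a / (a + b)) * D ^ (b / (a + b))) := by
  have hab : 0 < a + b := add_pos ha hb
  have hsum : (a + b) ^ (a / (a + b)) * (a + b) ^ (b / (a + b)) = a + b := by
    rw [← rpow_add hab, ← add_div, div_self hab.ne', rpow_one]
  rw [div_div_eq_mul_div, div_div_eq_mul_div, div_rpow (mul_nonneg hA hab.le) ha.le,
    div_rpow (mul_nonneg hD hab.le) hb.le, mul_rpow hA hab.le, mul_rpow hD hab.le]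
  have ha_pow := rpow_pos_of_pos ha (a / (a + b))
  have hb_pow := rpow_pos_of_pos hb (b / (a + b))
  field_simp
  linear_combination A ^ (a / (a + b)) * D ^ (b / (a + b)) * hsum

lemma rpow_mul_le_rpow_add {a b A D t : ℝ} (ha : 0 < a) (hb : 0 < b) (hA : 0 ≤ A) (hD : 0 ≤ D)
    (ht : 0 ≤ t) :
    (a + b) / (b ^ (b / (a + b)) * a ^ (a / (a + b))) * (A ^ (a / (a + b)) * D ^ (b / (a + b))) *
      t ^ a ≤ A * t ^ (a + b) + D := by
  have hab : 0 < a + b := add_pos ha hb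
  have ht_pow : t ^ a = (t ^ (a + b)) ^ (a / (a + b)) := by
    rw [← rpow_mul ht, mul_div_cancel₀ a hab.ne']
  rw [← div_rpow_mul_div_rpow_eq ha hb hA hD, ht_pow]
  exact rpow_weighted_le_mul_add (div_pos ha hab) (div_pos hb hab)
    (by rw [← add_div, div_self hab.ne']) hA hD (rpow_nonneg ht _)

theorem stmt3_general (p q A B D η : ℝ) (hq : 1 < q) (hqp : q < p)
    (hA : 0 < A) (hB : 0 < B) (hD : 0 < D)
    (hηlt : η < (p - 1) / ((p - q) ^ ((p - q) / (p - 1)) * (q - 1) ^ ((q - 1) / (p - 1))) *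
      (A ^ ((q - 1) / (p - 1)) * D ^ ((p - q) / (p - 1)) / B)) :
    ∀ t : ℝ, 0 ≤ t → 0 < A * t ^ (p - 1) - η * B * t ^ (q - 1) + D := by
  intro t ht
  have bound := rpow_mul_le_rpow_add (sub_pos.2 hq) (sub_pos.2 hqp) hA.le hD.le ht
  rw [show q - 1 + (p - q) = p - 1 by ring] at bound
  rw [← mul_div_assoc, lt_div_iff₀ hB] at hηlt
  rcases (rpow_nonneg ht (q - 1)).eq_or_lt with hzero | hpos
  · rw [← hzero]
    nlinarith [rpow_nonneg ht (p - 1)]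
  · nlinarith [mul_lt_mul_of_pos_right hηlt hpos]

theorem stmt3 (p q A B D η : ℝ) (hp : 1 < p) (hq : 1 < q) (hqp : q < p)
    (hA : 0 < A) (hB : 0 < B) (hD : 0 < D) (hη : 0 < η)
    (hηlt : η < (p - 1) / ((p - q) ^ ((p - q) / (p - 1)) * (q - 1) ^ ((q - 1) / (p - 1))) *
      (A ^ ((q - 1) / (p - 1)) * D ^ ((p - q) / (p - 1)) / B)) :
    ∀ t : ℝ, 0 ≤ t → 0 < A * t ^ (p - 1) - η * B * t ^ (q - 1) + D :=
  stmt3_general p q A B D η hq hqp hA hB hD hηlt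
end

section
/- Let p > 1, 1 < q < p, A > 0, B > 0, D > 0, η > 0. If t₀ > 0 satisfies (p−1) A t₀^{p−1} = η (q−1) B t₀^{q−1} and t₀^{p−1} ≥ ((q−1)/(p−q))(D/A), then η ≥ [(p−1)/((p−q)^{(p−q)/(p−1)} (q−1)^{(q−1)/(p−1)})] · A^{(q−1)/(p−1)} D^{(p−q)/(p−1)} / B. -/
/-!
Dividing the critical-point equation by `t₀ ^ (q - 1)` gives `η (q - 1) B = (p - 1) A t₀ ^ (p - q)`.
Raising the lower bound on `t₀ ^ (p - 1)` to the power `(p - q) / (p - 1)` bounds `t₀ ^ (p - q)`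
from below, and since `(p - q) / (p - 1) + (q - 1) / (p - 1) = 1` the resulting lower bound on `η`
is exactly the stated critical value.
-/

open Real

lemma mul_rpow_sub_eq_of_mul_rpow_eq {t a b r s : ℝ} (ht : 0 < t) (h : a * t ^ r = b * t ^ s) :
    a * t ^ (r - s) = b := by
  rw [rpow_sub ht, ← mul_div_assoc, h, mul_div_assoc, div_self (rpow_pos_of_pos ht s).ne',
    mul_one]

lemma rpow_div_le_rpow_of_le_rpow {c t r s : ℝ} (hc : 0 ≤ c) (ht : 0 < t) (hr : 0 < r)
    (hs : 0 ≤ s) (h : c ≤ t ^ r) : c ^ (s / r) ≤ t ^ s :=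
  calc c ^ (s / r) ≤ (t ^ r) ^ (s / r) := rpow_le_rpow hc h (div_nonneg hs hr.le)
    _ = t ^ s := by rw [← rpow_mul ht.le, mul_div_cancel₀ s hr.ne']

lemma mul_rpow_div_eq_rpow_one_sub {a c A D α : ℝ} (ha : 0 < a) (hc : 0 ≤ c) (hA : 0 < A) (hD : 0 ≤ D) :
    A * (a / c * (D / A)) ^ α / a = A ^ (1 - α) * D ^ α / (c ^ α * a ^ (1 - α)) := by
  rw [mul_rpow (div_nonneg ha.le hc) (div_nonneg hD hA.le), div_rpow ha.le hc,
    div_rpow hD hA.le, rpow_sub hA, rpow_sub ha, rpow_one, rpow_one]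
  have := rpow_pos_of_pos ha α
  have := rpow_pos_of_pos hA α
  field_simp

theorem stmt5_general (p q A B D η t₀ : ℝ) (hq : 1 < q) (hqp : q < p)
    (hA : 0 < A) (hB : 0 < B) (hD : 0 < D) (ht₀ : 0 < t₀)
    (hcrit : (p - 1) * A * t₀ ^ (p - 1) = η * (q - 1) * B * t₀ ^ (q - 1))
    (ht₀ge : t₀ ^ (p - 1) ≥ ((q - 1) / (p - q)) * (D / A)) :
    η ≥ (p - 1) / ((p - q) ^ ((p - q) / (p - 1)) * (q - 1) ^ ((q - 1) / (p - 1))) *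
      (A ^ ((q - 1) / (p - 1)) * D ^ ((p - q) / (p - 1)) / B) := by
  have hp1 : 0 < p - 1 := by linarith
  have hq1 : 0 < q - 1 := by linarith
  have hpq : 0 < p - q := by linarith
  have hβ : (q - 1) / (p - 1) = 1 - (p - q) / (p - 1) := by field_simp; ring
  have hη : (p - 1) * A * t₀ ^ (p - q) = η * (q - 1) * B := by
    simpa using mul_rpow_sub_eq_of_mul_rpow_eq ht₀ hcrit
  have hbound : ((q - 1) / (p - q) * (D / A)) ^ ((p - q) / (p - 1)) ≤ t₀ ^ (p - q) :=
    rpow_div_le_rpow_of_le_rpow (by positivity) ht₀ hp1 hpq.le ht₀ge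
  have hvalue : (p - 1) / ((p - q) ^ ((p - q) / (p - 1)) * (q - 1) ^ ((q - 1) / (p - 1))) *
      (A ^ ((q - 1) / (p - 1)) * D ^ ((p - q) / (p - 1)) / B) =
      (p - 1) * A * ((q - 1) / (p - q) * (D / A)) ^ ((p - q) / (p - 1)) / (q - 1) / B := by
    have key := mul_rpow_div_eq_rpow_one_sub (α := (p - q) / (p - 1)) hq1 hpq.le hA hD.le
    rw [← hβ] at key
    linear_combination (-(p - 1) / B) * key
  rw [hvalue, ge_iff_le, div_le_iff₀ hB, div_le_iff₀ hq1]
  linarith [mul_le_mul_of_nonneg_left hbound (by positivity : 0 ≤ (p - 1) * A)]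

theorem stmt5 (p q A B D η t₀ : ℝ) (hp : 1 < p) (hq : 1 < q) (hqp : q < p)
    (hA : 0 < A) (hB : 0 < B) (hD : 0 < D) (hη : 0 < η) (ht₀ : 0 < t₀)
    (hcrit : (p - 1) * A * t₀ ^ (p - 1) = η * (q - 1) * B * t₀ ^ (q - 1))
    (ht₀ge : t₀ ^ (p - 1) ≥ ((q - 1) / (p - q)) * (D / A)) :
    η ≥ (p - 1) / ((p - q) ^ ((p - q) / (p - 1)) * (q - 1) ^ ((q - 1) / (p - 1))) *
      (A ^ ((q - 1) / (p - 1)) * D ^ ((p - q) / (p - 1)) / B) :=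
  stmt5_general p q A B D η t₀ hq hqp hA hB hD ht₀ hcrit ht₀ge
end
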